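/- Let E be an entire function, Π the canonical product over the zeros of E, P and Q real polynomials with E = Π·e^{P+iQ}. If E is a Bank-Laine function (E(z)=0 ⟹ E'(z)=±1) and all zeros of E are real, then F = Π·e^P satisfies: at every zero z of E, F'(z) = ±1, i.e. F is also a Bank-Laine function. -/

import Mathlib

/-!
At a zero `z` of `E` the factor `Π` vanishes, so `E'(z) = Π'(z) e^{P(z)} e^{iQ(z)}` and
`F'(z) = Π'(z) e^{P(z)}`. As `z` is real and `Π` is real on the real axis, `F'(z)` is real;
as `Q(z)` is real, `|F'(z)| = |E'(z)| = 1`. Hence `F'(z) = ±1`.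
-/

open Complex Polynomial

theorem HasDerivAt.im_eq_zero_of_forall_im_ofReal_eq_zero {f : ℂ → ℂ} {f' : ℂ} {x : ℝ}
    (hf : HasDerivAt f f' x) (hreal : ∀ t : ℝ, (f t).im = 0) : f'.im = 0 := by
  have him : HasDerivAt (fun t : ℝ => (f t).im) f'.im x :=
    imCLM.hasFDerivAt.comp_hasDerivAt x hf.comp_ofReal
  simp only [hreal] at him
  exact him.unique (hasDerivAt_const x 0)

theorem deriv_mul_of_eq_zero {f g : ℂ → ℂ} {z : ℂ} (hf : DifferentiableAt ℂ f z) (hfz : f z = 0)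
    (hg : DifferentiableAt ℂ g z) : deriv (fun w => f w * g w) z = deriv f z * g z := by
  rw [deriv_fun_mul hf hg, hfz, zero_mul, add_zero]

theorem Polynomial.eval_map_ofReal (p : ℝ[X]) (x : ℝ) :
    (p.map (algebraMap ℝ ℂ)).eval (x : ℂ) = ((p.eval x : ℝ) : ℂ) := by
  rw [eval_map_algebraMap]
  exact aeval_algebraMap_apply ℂ x p

theorem Complex.eq_one_or_eq_neg_one_of_im_eq_zero_of_norm_eq_one {w : ℂ} (him : w.im = 0)
    (hnorm : ‖w‖ = 1) : w = 1 ∨ w = -1 := by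
  have hw : w = (w.re : ℂ) := Complex.ext rfl (by simp [him])
  rw [hw, norm_real, Real.norm_eq_abs] at hnorm
  rw [hw]
  rcases abs_eq zero_le_one |>.mp hnorm with h | h
  · left; rw [h]; simp
  · right; rw [h]; simp

theorem stmt_19 (E Pi0 F : ℂ → ℂ) (P Q : Polynomial ℝ)
    (hPi : Differentiable ℂ Pi0)
    (hPireal : ∀ x : ℝ, (Pi0 (x : ℂ)).im = 0)
    (hE : ∀ z, E z = Pi0 z *
      Complex.exp ((P.map (algebraMap ℝ ℂ)).eval z + Complex.I * (Q.map (algebraMap ℝ ℂ)).eval z))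
    (hBL : ∀ z, E z = 0 → deriv E z = 1 ∨ deriv E z = -1)
    (hzeros : ∀ z, E z = 0 → z.im = 0)
    (hF : ∀ z, F z = Pi0 z * Complex.exp ((P.map (algebraMap ℝ ℂ)).eval z)) :
    ∀ z, E z = 0 → deriv F z = 1 ∨ deriv F z = -1 := by
  intro z hz
  obtain ⟨x, rfl⟩ : ∃ x : ℝ, (x : ℂ) = z := ⟨z.re, Complex.ext rfl (by simp [hzeros z hz])⟩
  have hPi0 : Pi0 x = 0 :=
    (mul_eq_zero.mp ((hE x).symm.trans hz)).resolve_right (exp_ne_zero _)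
  have hdF : deriv F x = deriv Pi0 x * exp (P.eval x : ℝ) := by
    rw [funext hF, deriv_mul_of_eq_zero (hPi x) hPi0 (by fun_prop), eval_map_ofReal]
  have hdE : deriv E x = deriv F x * exp ((Q.eval x : ℝ) * I) := by
    rw [funext hE, deriv_mul_of_eq_zero (hPi x) hPi0 (by fun_prop), hdF, eval_map_ofReal,
      eval_map_ofReal, exp_add, mul_comm I, mul_assoc]
  apply eq_one_or_eq_neg_one_of_im_eq_zero_of_norm_eq_one
  · have hreal := (hPi x).hasDerivAt.im_eq_zero_of_forall_im_ofReal_eq_zero hPireal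
    simp [hdF, mul_im, hreal, exp_ofReal_im]
  · have hnormE : ‖deriv E x‖ = 1 := by rcases hBL x hz with h | h <;> simp [h]
    rwa [hdE, norm_mul, norm_exp_ofReal_mul_I, mul_one] at hnormE
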